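/- arXiv:2210.12159 — 8 statements merged into one kernel-verified Lean document; each statement's English description precedes it below -/
import Mathlib

section
/- For every non-negative integer n and every integer s, 2 * ∑_{k=0}^{⌊n/2⌋} C(n, 2k) * F(2k+s) = F(2n+s) - (-1)^s * F(n-s), where F denotes the Fibonacci sequence extended to all integers via F(-j) = (-1)^(j-1) F(j). -/
/-!
Let `E` be the shift `f ↦ f (· + 1)`. The recurrence says `1 + E = E²` and `1 - E = -E⁻¹`, so
expanding `(1 + E)ⁿ` and `(1 - E)ⁿ` by the binomial theorem gives
`∑ C(n,k) F(k+s) = F(2n+s)` and `∑ (-1)ᵏ C(n,k) F(k+s) = (-1)ⁿ F(s-n)`. Adding the two keeps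
twice the even-index terms, and the reflection `F(-m) = (-1)^(m+1) F(m)` turns `(-1)ⁿ F(s-n)`
into `-(-1)^s F(n-s)`.
-/

open Finset

section

variable {R : Type*} [CommRing R]

theorem sum_choose_mul_pow_mul_apply_add {f : ℤ → R} {c e : R} {d : ℤ}
    (h : ∀ j, f j + c * f (j + 1) = e * f (j + d)) (n : ℕ) (s : ℤ) :
    ∑ k ∈ range (n + 1), (n.choose k : R) * (c ^ k * f (k + s)) = e ^ n * f (s + n * d) := by
  induction n generalizing s with
  | zero => simp
  | succ n ih =>
    rw [sum_choose_succ_mul (fun k _ => c ^ k * f (k + s)) n]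
    have hshift : ∑ k ∈ range (n + 1), (n.choose k : R) * (c ^ (k + 1) * f ((k + 1 : ℕ) + s))
        = c * (e ^ n * f (s + 1 + n * d)) := by
      rw [← ih (s + 1), mul_sum]
      refine sum_congr rfl fun k _ => ?_
      push_cast
      ring_nf
    rw [ih, hshift, pow_succ]
    push_cast
    rw [show s + (n + 1) * d = s + n * d + d by ring, show s + 1 + n * d = s + n * d + 1 by ring]
    linear_combination e ^ n * h (s + n * d)

theorem sum_range_one_add_neg_one_pow_mul (g : ℕ → R) (n : ℕ) :
    ∑ k ∈ range (n + 1), (1 + (-1) ^ k) * g k = 2 * ∑ j ∈ range (n / 2 + 1), g (2 * j) := by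
  have himage : (range (n / 2 + 1)).image (2 * ·) = (range (n + 1)).filter Even := by
    ext k
    simp only [mem_image, mem_range, mem_filter, even_iff_exists_two_mul]
    constructor
    · rintro ⟨j, hj, rfl⟩
      exact ⟨by omega, j, rfl⟩
    · rintro ⟨hk, j, rfl⟩
      exact ⟨j, by omega, rfl⟩
  calc ∑ k ∈ range (n + 1), (1 + (-1) ^ k) * g k
      = ∑ k ∈ range (n + 1), if Even k then 2 * g k else 0 := by
        refine sum_congr rfl fun k _ => ?_
        rcases k.even_or_odd with hk | hk
        · rw [hk.neg_one_pow, if_pos hk]; ring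
        · rw [hk.neg_one_pow, if_neg (Nat.not_even_iff_odd.mpr hk)]; ring
    _ = ∑ j ∈ range (n / 2 + 1), 2 * g (2 * j) := by
        rw [← sum_filter, ← himage, sum_image fun _ _ _ _ h => by omega]
    _ = 2 * ∑ j ∈ range (n / 2 + 1), g (2 * j) := (mul_sum ..).symm

theorem neg_one_pow_mul_neg_one_pow_natAbs_sub (n : ℕ) (s : ℤ) :
    (-1 : R) ^ n * (-1) ^ ((n : ℤ) - s).natAbs = (-1) ^ s.natAbs := by
  rw [show (-1 : R) ^ n = ((n : ℤ).negOnePow : R) by rw [Int.coe_negOnePow, Int.natAbs_natCast]]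
  simp only [← Int.coe_negOnePow, ← Int.cast_mul, ← Units.val_mul, Int.negOnePow_sub, ← mul_assoc,
    Int.units_mul_self, one_mul]

end

namespace Fibonacci

variable {R : Type*} [CommRing R] {F : ℤ → R} (hF0 : F 0 = 0) (hF1 : F 1 = 1)
  (hF : ∀ j : ℤ, F j = F (j - 1) + F (j - 2))
include hF0 hF1 hF

theorem apply_neg_natCast (n : ℕ) : F (-n) = (-1) ^ (n + 1) * F n := by
  induction n using Nat.twoStepInduction with
  | zero => simp [hF0]
  | one =>
    have := hF 1
    norm_num [hF0, hF1] at this ⊢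
    linear_combination -this
  | more n ih ih' =>
    have h1 := hF (-n)
    have h2 := hF (n + 2)
    push_cast at ih' ⊢
    rw [show -(n : ℤ) - 1 = -(n + 1) by ring, show -(n : ℤ) - 2 = -(n + 2) by ring] at h1
    rw [show (n : ℤ) + 2 - 1 = n + 1 by ring, show (n : ℤ) + 2 - 2 = n by ring] at h2
    rw [h2]
    linear_combination -h1 + ih - ih'

theorem apply_neg (m : ℤ) : F (-m) = -(-1) ^ m.natAbs * F m := by
  obtain ⟨k, rfl | rfl⟩ := Int.eq_nat_or_neg m
  · rw [apply_neg_natCast hF0 hF1 hF, Int.natAbs_natCast, pow_succ]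
    ring
  · rw [neg_neg, Int.natAbs_neg, Int.natAbs_natCast, apply_neg_natCast hF0 hF1 hF, pow_succ]
    linear_combination -F k * (Even.neg_one_pow ⟨k, rfl⟩ : (-1 : R) ^ (k + k) = 1)

theorem neg_one_pow_mul_apply_sub (n : ℕ) (s : ℤ) :
    (-1) ^ n * F (s - n) = -(-1) ^ s.natAbs * F (n - s) := by
  rw [← neg_sub, apply_neg hF0 hF1 hF, ← neg_one_pow_mul_neg_one_pow_natAbs_sub n s]
  ring

end Fibonacci

theorem stmt0 (F : ℤ → ℤ) (hF0 : F 0 = 0) (hF1 : F 1 = 1)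
    (hF : ∀ j : ℤ, F j = F (j - 1) + F (j - 2)) (n : ℕ) (s : ℤ) :
    2 * ∑ k ∈ Finset.range (n / 2 + 1), (n.choose (2 * k) : ℤ) * F (2 * (k : ℤ) + s)
      = F (2 * (n : ℤ) + s) - (-1 : ℤ) ^ s.natAbs * F ((n : ℤ) - s) := by
  have hA := sum_choose_mul_pow_mul_apply_add (f := F) (c := 1) (e := 1) (d := 2)
    (fun j => by rw [hF (j + 2)]; ring_nf) n s
  have hB := sum_choose_mul_pow_mul_apply_add (f := F) (c := -1) (e := -1) (d := -1)
    (fun j => by rw [hF (j + 1)]; ring_nf) n s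
  calc 2 * ∑ k ∈ range (n / 2 + 1), (n.choose (2 * k) : ℤ) * F (2 * (k : ℤ) + s)
      = ∑ k ∈ range (n + 1), (1 + (-1) ^ k) * ((n.choose k : ℤ) * F (k + s)) := by
        rw [sum_range_one_add_neg_one_pow_mul]
        push_cast
        rfl
    _ = ∑ k ∈ range (n + 1), (n.choose k : ℤ) * (1 ^ k * F (k + s))
        + ∑ k ∈ range (n + 1), (n.choose k : ℤ) * ((-1) ^ k * F (k + s)) := by
        rw [← sum_add_distrib]
        exact sum_congr rfl fun k _ => by ring
    _ = F (2 * n + s) + (-1) ^ n * F (s - n) := by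
        rw [hA, hB, one_pow, one_mul, show s + n * 2 = 2 * n + s by ring,
          show s + n * -1 = s - n by ring]
    _ = F (2 * n + s) - (-1) ^ s.natAbs * F (n - s) := by
        rw [Fibonacci.neg_one_pow_mul_apply_sub hF0 hF1 hF]
        ring
end

section
/- For every non-negative integer n and every integer s, 2 * ∑_{k=0}^{⌊n/2⌋} C(n, 2k) * L(2k+s) = L(2n+s) + (-1)^s * L(n-s), where L denotes the Lucas sequence extended to all integers. -/
/-!
A sequence with `f j = f (j - 1) + f (j - 2)` has forward difference `Δ f j = f (j - 1)`, so
`Δ^k f j = f (j - k)`. Newton's forward-difference formula and its inverse then give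
`∑ C(n,k) f(s+k) = f(s+2n)` and `∑ (-1)^k C(n,k) f(s+k) = (-1)^n f(s-n)`. Adding the two keeps
exactly twice the even-indexed terms, and `L(-j) = (-1)^j L(j)` turns `L(s-n)` into `L(n-s)`.
-/

open Finset fwdDiff

def IsFibLike {G : Type*} [AddCommGroup G] (f : ℤ → G) : Prop :=
  ∀ j, f j = f (j - 1) + f (j - 2)

namespace IsFibLike

variable {G : Type*} [AddCommGroup G] {f : ℤ → G} (hf : IsFibLike f)
include hf

lemma fwdDiff_iter_one (k : ℕ) : Δ_[1] ^[k] f = fun j ↦ f (j - k) := by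
  induction k with
  | zero => simp
  | succ k ih =>
    funext j
    rw [Function.iterate_succ_apply', ih, fwdDiff, hf (j + 1 - k)]
    push_cast
    ring_nf
    abel

lemma sum_choose_smul_add (n : ℕ) (s : ℤ) :
    ∑ k ∈ range (n + 1), n.choose k • f (s + k) = f (s + 2 * n) := by
  calc ∑ k ∈ range (n + 1), n.choose k • f (s + k)
      = ∑ k ∈ range (n + 1), n.choose (n + 1 - 1 - k) • f (s + n - (n + 1 - 1 - k : ℕ)) := by
        refine sum_congr rfl fun k hk ↦ ?_
        rw [Nat.add_sub_cancel, Nat.choose_symm (by simpa [Nat.lt_succ_iff] using hk),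
          Nat.cast_sub (by simpa [Nat.lt_succ_iff] using hk)]
        ring_nf
    _ = ∑ k ∈ range (n + 1), n.choose k • f (s + n - k) :=
        sum_range_reflect (fun k ↦ n.choose k • f (s + n - k)) (n + 1)
    _ = f (s + 2 * n) := by
        rw [show s + 2 * n = s + n + n • 1 by simp; ring, shift_eq_sum_fwdDiff_iter 1 f]
        simp only [hf.fwdDiff_iter_one]

lemma sum_neg_one_pow_mul_choose_smul_add (n : ℕ) (s : ℤ) :
    ∑ k ∈ range (n + 1), ((-1) ^ k * n.choose k : ℤ) • f (s + k) = (-1) ^ n • f (s - n) := by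
  have h := congrFun (hf.fwdDiff_iter_one n) s
  rw [fwdDiff_iter_eq_sum_shift] at h
  rw [← h, smul_sum]
  refine sum_congr rfl fun k hk ↦ ?_
  obtain ⟨d, rfl⟩ := Nat.exists_eq_add_of_le (Nat.lt_succ_iff.mp (mem_range.mp hk))
  rw [smul_smul, Nat.add_sub_cancel_left, nsmul_one]
  congr 1
  rw [pow_add, mul_assoc, ← mul_assoc ((-1) ^ d), ← mul_pow, neg_one_mul, neg_neg, one_pow,
    one_mul]

lemma apply_neg_natCast (h0 : f 0 = 2 • f 1) (m : ℕ) : f (-m) = (-1 : ℤ) ^ m • f m := by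
  induction m using Nat.twoStepInduction with
  | zero => simp
  | one =>
    have h1 := hf 1
    norm_num [h0] at h1 ⊢
    rw [two_nsmul, add_assoc, left_eq_add] at h1
    exact (neg_eq_of_add_eq_zero_right h1).symm
  | more m ih ih' =>
    have hneg := hf (-m)
    have hpos := hf (m + 2)
    push_cast at ih' ⊢
    rw [show -(m : ℤ) - 1 = -(m + 1) by ring, show -(m : ℤ) - 2 = -(m + 2) by ring] at hneg
    rw [show (m : ℤ) + 2 - 1 = m + 1 by ring, show (m : ℤ) + 2 - 2 = m by ring] at hpos
    rw [eq_sub_of_add_eq' hneg.symm, ih, ih', hpos, pow_succ, pow_succ]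
    module

lemma apply_neg (h0 : f 0 = 2 • f 1) (j : ℤ) : f (-j) = (-1 : ℤ) ^ j.natAbs • f j := by
  obtain ⟨m, rfl | rfl⟩ := Int.eq_nat_or_neg j
  · simpa using hf.apply_neg_natCast h0 m
  · rw [hf.apply_neg_natCast h0 m, Int.natAbs_neg, Int.natAbs_natCast, neg_neg, smul_smul,
      ← mul_pow, neg_one_mul, neg_neg, one_pow, one_smul]

end IsFibLike

lemma two_mul_sum_range_even {R : Type*} [Ring R] (g : ℕ → R) (n : ℕ) :
    2 * ∑ k ∈ range (n / 2 + 1), g (2 * k) = ∑ k ∈ range (n + 1), (1 + (-1) ^ k) * g k := by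
  have heven : (range (n + 1)).filter Even
      = (range (n / 2 + 1)).map ⟨(2 * ·), mul_right_injective₀ two_ne_zero⟩ := by
    ext k
    simp only [mem_filter, mem_range, mem_map, Function.Embedding.coeFn_mk]
    constructor
    · rintro ⟨hk, j, rfl⟩
      exact ⟨j, by omega, by omega⟩
    · rintro ⟨j, hj, rfl⟩
      exact ⟨by omega, even_two_mul j⟩
  have hsum : ∑ k ∈ range (n / 2 + 1), g (2 * k) = ∑ k ∈ (range (n + 1)).filter Even, g k := by
    rw [heven, sum_map]
    rfl
  rw [hsum, sum_filter, mul_sum]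
  refine sum_congr rfl fun k _ ↦ ?_
  rcases Nat.even_or_odd k with hk | hk
  · rw [if_pos hk, hk.neg_one_pow, one_add_one_eq_two]
  · rw [if_neg (Nat.not_even_iff_odd.mpr hk), hk.neg_one_pow, add_neg_cancel, zero_mul, mul_zero]

theorem stmt1 (L : ℤ → ℤ) (hL0 : L 0 = 2) (hL1 : L 1 = 1)
    (hL : ∀ j : ℤ, L j = L (j - 1) + L (j - 2)) (n : ℕ) (s : ℤ) :
    2 * ∑ k ∈ Finset.range (n / 2 + 1), (n.choose (2 * k) : ℤ) * L (2 * (k : ℤ) + s)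
      = L (2 * (n : ℤ) + s) + (-1 : ℤ) ^ s.natAbs * L ((n : ℤ) - s) := by
  have hfib : IsFibLike L := hL
  have h0 : L 0 = 2 • L 1 := by rw [hL0, hL1]; rfl
  have hsum := hfib.sum_choose_smul_add n s
  have halt := hfib.sum_neg_one_pow_mul_choose_smul_add n s
  have hneg := hfib.apply_neg h0 ((n : ℤ) - s)
  simp only [nsmul_eq_mul, smul_eq_mul] at hsum halt hneg
  have hparity : (-1 : ℤ) ^ n * (-1) ^ ((n : ℤ) - s).natAbs = (-1) ^ s.natAbs := by
    rw [← pow_add, neg_one_pow_eq_pow_mod_two,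
      show (n + ((n : ℤ) - s).natAbs) % 2 = s.natAbs % 2 by omega, ← neg_one_pow_eq_pow_mod_two]
  calc 2 * ∑ k ∈ range (n / 2 + 1), (n.choose (2 * k) : ℤ) * L (2 * (k : ℤ) + s)
      = ∑ k ∈ range (n + 1), (1 + (-1) ^ k) * ((n.choose k : ℤ) * L (s + k)) := by
        rw [← two_mul_sum_range_even]
        push_cast [add_comm]
        rfl
    _ = L (s + 2 * n) + (-1) ^ n * L (s - n) := by
        rw [← hsum, ← halt, ← sum_add_distrib]
        exact sum_congr rfl fun k _ ↦ by ring
    _ = L (2 * n + s) + (-1) ^ s.natAbs * L (n - s) := by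
        rw [add_comm s, ← neg_sub, hneg, ← mul_assoc, hparity]
end

section
/- For every non-negative integer n and every integer s, 2 * ∑_{k=0}^{⌊n/2⌋} C(n, 2k) * L(6k+s) = 2^n * (L(2n+s) + (-1)^n * L(n+s)). -/
/-!
Writing `T` for the shift `f ↦ f (· + 1)`, a sequence with `L j = L (j - 1) + L (j - 2)` satisfies
`(T³ + 1) L = 2 T² L` and `(1 - T³) L = -2 T L`. Expanding `(1 ± T³)ⁿ` binomially gives
`∑ C(n,k) L(3k+s) = 2ⁿ L(2n+s)` and `∑ (-1)ᵏ C(n,k) L(3k+s) = (-2)ⁿ L(n+s)`; adding the two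
kills the odd indices and doubles the even ones.
-/

open Finset

theorem Finset.sum_range_choose_mul_pow_mul_of_shift {R : Type*} [CommSemiring R] (f : ℤ → R)
    (x c : R) (a b : ℤ) (h : ∀ m, x * f (m + a) + f m = c * f (m + b)) (n : ℕ) (s : ℤ) :
    ∑ k ∈ range (n + 1), (n.choose k : R) * (x ^ k * f (a * k + s)) = c ^ n * f (b * n + s) := by
  induction n generalizing s with
  | zero => simp
  | succ n ih =>
    have hshift : ∑ k ∈ range (n + 1), (n.choose k : R) * (x ^ (k + 1) * f (a * ↑(k + 1) + s))
        = x * ∑ k ∈ range (n + 1), (n.choose k : R) * (x ^ k * f (a * k + (s + a))) := by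
      rw [mul_sum]
      refine sum_congr rfl fun k _ => ?_
      rw [show a * ↑(k + 1) + s = a * k + (s + a) by push_cast; ring]
      ring
    have hstep := h (b * n + s)
    rw [add_assoc, add_assoc] at hstep
    rw [sum_choose_succ_mul (fun k _ => x ^ k * f (a * k + s)), hshift, ih, ih,
      show b * ↑(n + 1) + s = b * n + (s + b) by push_cast; ring]
    rw [pow_succ, mul_assoc, ← hstep]
    ring

theorem Finset.sum_range_div_two_succ_two_mul_of_odd_eq_zero {M : Type*} [AddCommMonoid M]
    (f : ℕ → M) (hf : ∀ k, Odd k → f k = 0) (n : ℕ) :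
    ∑ k ∈ range (n / 2 + 1), f (2 * k) = ∑ k ∈ range (n + 1), f k := by
  rw [← sum_image (g := (2 * ·)) fun i _ j _ hij => by simpa using hij]
  refine sum_subset (fun k hk => ?_) fun k hk hk' => hf k ?_
  · obtain ⟨j, hj, rfl⟩ := mem_image.mp hk
    simp only [mem_range] at hj ⊢
    omega
  · rw [← Nat.not_even_iff_odd]
    rintro ⟨j, rfl⟩
    simp only [mem_range, mem_image, not_exists, not_and] at hk hk'
    exact hk' j (by omega) (by ring)

section Recurrence

variable {R : Type*} [CommRing R] {L : ℤ → R}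

theorem recurrence_add_two (hL : ∀ j : ℤ, L j = L (j - 1) + L (j - 2)) (m : ℤ) :
    L (m + 2) = L (m + 1) + L m := by
  simpa [add_sub_assoc] using hL (m + 2)

theorem recurrence_add_three_add_self (hL : ∀ j : ℤ, L j = L (j - 1) + L (j - 2)) (m : ℤ) :
    L (m + 3) + L m = 2 * L (m + 2) := by
  have h3 := recurrence_add_two hL (m + 1)
  rw [show m + 1 + 2 = m + 3 by ring, show m + 1 + 1 = m + 2 by ring] at h3
  linear_combination h3 - recurrence_add_two hL m

theorem recurrence_self_sub_add_three (hL : ∀ j : ℤ, L j = L (j - 1) + L (j - 2)) (m : ℤ) :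
    L m - L (m + 3) = -2 * L (m + 1) := by
  have h3 := recurrence_add_two hL (m + 1)
  rw [show m + 1 + 2 = m + 3 by ring, show m + 1 + 1 = m + 2 by ring] at h3
  linear_combination -h3 - recurrence_add_two hL m

end Recurrence

theorem stmt3_general (L : ℤ → ℤ)
    (hL : ∀ j : ℤ, L j = L (j - 1) + L (j - 2)) (n : ℕ) (s : ℤ) :
    2 * ∑ k ∈ Finset.range (n / 2 + 1), (n.choose (2 * k) : ℤ) * L (6 * (k : ℤ) + s)
      = 2 ^ n * (L (2 * (n : ℤ) + s) + (-1 : ℤ) ^ n * L ((n : ℤ) + s)) := by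
  have hplus := sum_range_choose_mul_pow_mul_of_shift L 1 2 3 2
    (fun m => by rw [one_mul, recurrence_add_three_add_self hL]) n s
  have hminus := sum_range_choose_mul_pow_mul_of_shift L (-1) (-2) 3 1
    (fun m => by rw [neg_one_mul, neg_add_eq_sub, recurrence_self_sub_add_three hL]) n s
  let g k := (n.choose k : ℤ) * (1 ^ k * L (3 * k + s)) + n.choose k * ((-1) ^ k * L (3 * k + s))
  calc 2 * ∑ k ∈ range (n / 2 + 1), (n.choose (2 * k) : ℤ) * L (6 * (k : ℤ) + s)
      = ∑ k ∈ range (n / 2 + 1), g (2 * k) := by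
        rw [mul_sum]
        refine sum_congr rfl fun k _ => ?_
        simp only [g, pow_mul, neg_one_sq, one_pow, one_mul,
          show (3 : ℤ) * ↑(2 * k) + s = 6 * k + s by push_cast; ring]
        ring
    _ = ∑ k ∈ range (n + 1), g k :=
        sum_range_div_two_succ_two_mul_of_odd_eq_zero g (fun k hk => by simp [g, hk.neg_one_pow]) n
    _ = 2 ^ n * (L (2 * (n : ℤ) + s) + (-1 : ℤ) ^ n * L ((n : ℤ) + s)) := by
        rw [sum_add_distrib, hplus, hminus, one_mul, neg_eq_neg_one_mul, mul_pow]
        ring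

theorem stmt3 (L : ℤ → ℤ) (hL0 : L 0 = 2) (hL1 : L 1 = 1)
    (hL : ∀ j : ℤ, L j = L (j - 1) + L (j - 2)) (n : ℕ) (s : ℤ) :
    2 * ∑ k ∈ Finset.range (n / 2 + 1), (n.choose (2 * k) : ℤ) * L (6 * (k : ℤ) + s)
      = 2 ^ n * (L (2 * (n : ℤ) + s) + (-1 : ℤ) ^ n * L ((n : ℤ) + s)) :=
  stmt3_general L hL n s
end

section
/- For every non-negative integer n and all integers s and j, 2 * ∑_{k=0}^{n} C(2n, 2k) * F(j(4k+s)) = (L(j)^(2n) + 5^n * F(j)^(2n)) * F(j(2n+s)). -/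
/-!
With `α = φ ^ j` and `β = ψ ^ j` we have `L j = α + β`, `√5 F j = α - β` and `(α β) ^ 2 = 1`.
Only the even binomial terms survive in `(α + β) ^ (2n) + (α - β) ^ (2n)`, and since
`β ^ 2 = α ^ (-2)` each of them is `C(2n, 2k) α ^ (4k - 2n)`; symmetrically it is also
`C(2n, 2k) β ^ (4k - 2n)`. Multiplying the first form by `φ ^ (j (2n + s))` and the second by
`ψ ^ (j (2n + s))` and subtracting gives Binet's formula for the left-hand side.
-/

open Finset Real
open scoped goldenRatio

theorem eq_of_fib_recurrence {R : Type*} [AddCommGroup R] {f g : ℤ → R}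
    (hf : ∀ t, f t = f (t - 1) + f (t - 2)) (hg : ∀ t, g t = g (t - 1) + g (t - 2))
    (h0 : f 0 = g 0) (h1 : f 1 = g 1) : f = g := by
  suffices h : ∀ t : ℤ, f t = g t ∧ f (t + 1) = g (t + 1) from funext fun t => (h t).1
  intro t
  induction t using Int.induction_on with
  | zero => simpa using ⟨h0, h1⟩
  | succ k ih =>
    refine ⟨ih.2, ?_⟩
    rw [hf, hg, add_sub_cancel_right, show (k : ℤ) + 1 + 1 - 2 = k by ring, ih.1, ih.2]
  | pred k ih =>
    refine ⟨?_, by simpa using ih.1⟩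
    have hf' := hf (-k + 1)
    have hg' := hg (-k + 1)
    rw [add_sub_cancel_right, show -(k : ℤ) + 1 - 2 = -k - 1 by ring] at hf' hg'
    rw [ih.1, ih.2] at hf'
    exact add_left_cancel (hf'.symm.trans hg')

theorem zpow_eq_zpow_sub_one_add_zpow_sub_two {K : Type*} [DivisionRing K] {x : K} (hx : x ≠ 0)
    (hsq : x ^ 2 = x + 1) (t : ℤ) : x ^ t = x ^ (t - 1) + x ^ (t - 2) := by
  calc x ^ t = x ^ (t - 2) * x ^ 2 := by rw [← zpow_natCast, ← zpow_add₀ hx]; norm_num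
    _ = x ^ (t - 1) + x ^ (t - 2) := by
      rw [hsq, mul_add, mul_one, ← zpow_add_one₀ hx]; ring_nf

theorem add_pow_two_mul_add_sub_pow_two_mul {R : Type*} [CommRing R] (x y : R) (n : ℕ) :
    (x + y) ^ (2 * n) + (x - y) ^ (2 * n)
      = 2 * ∑ k ∈ range (n + 1), x ^ (2 * k) * y ^ (2 * n - 2 * k) * (2 * n).choose (2 * k) := by
  have hterm : ∀ m ∈ range (2 * n + 1),
      x ^ m * y ^ (2 * n - m) * (2 * n).choose m
        + (-1) ^ (m + 2 * n) * x ^ m * y ^ (2 * n - m) * (2 * n).choose m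
      = if Even m then 2 * (x ^ m * y ^ (2 * n - m) * (2 * n).choose m) else 0 := by
    intro m _
    rcases Nat.even_or_odd m with hm | hm
    · rw [if_pos hm, (hm.add (even_two_mul n)).neg_one_pow]; ring
    · rw [if_neg (Nat.not_even_iff_odd.mpr hm), (hm.add_even (even_two_mul n)).neg_one_pow]; ring
  have hevens : {m ∈ range (2 * n + 1) | Even m}
      = (range (n + 1)).map ⟨(2 * ·), mul_right_injective₀ two_ne_zero⟩ := by
    ext m
    simp only [mem_filter, mem_range, mem_map, Function.Embedding.coeFn_mk]
    constructor
    · rintro ⟨hm, k, rfl⟩; exact ⟨k, by omega, by ring⟩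
    · rintro ⟨k, hk, rfl⟩; exact ⟨by omega, even_two_mul k⟩
  rw [add_pow, sub_pow, ← sum_add_distrib, sum_congr rfl hterm, ← sum_filter, hevens, sum_map,
    mul_sum]
  rfl

theorem add_pow_two_mul_add_sub_pow_two_mul_eq_sum_zpow {K : Type*} [Field K] {x y : K}
    (hxy : (x * y) ^ 2 = 1) (n : ℕ) :
    (x + y) ^ (2 * n) + (x - y) ^ (2 * n)
      = 2 * ∑ k ∈ range (n + 1), ((2 * n).choose (2 * k) : K) * x ^ (4 * (k : ℤ) - 2 * n) := by
  have hx : x ≠ 0 := by rintro rfl; simp at hxy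
  have hy : y ^ 2 = (x ^ 2)⁻¹ := eq_inv_of_mul_eq_one_right (by rw [← mul_pow, hxy])
  rw [add_pow_two_mul_add_sub_pow_two_mul]
  congr 1
  refine sum_congr rfl fun k hk => ?_
  have hkn : k ≤ n := Nat.lt_succ_iff.mp (mem_range.mp hk)
  have hzpow : x ^ (4 * (k : ℤ) - 2 * n) = x ^ (2 * k) * (y ^ 2) ^ (n - k) := by
    rw [hy, inv_pow, ← pow_mul, ← zpow_natCast, ← zpow_natCast, ← zpow_neg, ← zpow_add₀ hx]
    push_cast [hkn]
    ring_nf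
  rw [hzpow, ← pow_mul, Nat.mul_sub]
  ring

theorem two_mul_sum_choose_mul_zpow {K : Type*} [Field K] {x y : K} (hxy : (x * y) ^ 2 = 1)
    (n : ℕ) (j s : ℤ) :
    2 * ∑ k ∈ range (n + 1), ((2 * n).choose (2 * k) : K) * x ^ (j * (4 * (k : ℤ) + s))
      = ((x ^ j + y ^ j) ^ (2 * n) + (x ^ j - y ^ j) ^ (2 * n)) * x ^ (j * (2 * (n : ℤ) + s)) := by
  have hx : x ≠ 0 := by rintro rfl; simp at hxy
  have hxyj : (x ^ j * y ^ j) ^ 2 = 1 := by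
    rw [← mul_zpow, ← zpow_natCast, ← zpow_mul, mul_comm j, zpow_mul, zpow_natCast, hxy, one_zpow]
  rw [add_pow_two_mul_add_sub_pow_two_mul_eq_sum_zpow hxyj, mul_assoc, sum_mul]
  congr 1
  refine sum_congr rfl fun k _ => ?_
  rw [mul_assoc, ← zpow_mul, ← zpow_add₀ hx]
  ring_nf

theorem two_mul_sum_choose_mul_zpow_sub_zpow {K : Type*} [Field K] {x y : K}
    (hxy : (x * y) ^ 2 = 1) (n : ℕ) (j s : ℤ) :
    2 * ∑ k ∈ range (n + 1),
        ((2 * n).choose (2 * k) : K) * (x ^ (j * (4 * (k : ℤ) + s)) - y ^ (j * (4 * (k : ℤ) + s)))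
      = ((x ^ j + y ^ j) ^ (2 * n) + (x ^ j - y ^ j) ^ (2 * n))
          * (x ^ (j * (2 * (n : ℤ) + s)) - y ^ (j * (2 * (n : ℤ) + s))) := by
  have hyx : (y * x) ^ 2 = 1 := by rwa [mul_comm]
  have hsymm : (y ^ j + x ^ j) ^ (2 * n) + (y ^ j - x ^ j) ^ (2 * n)
      = (x ^ j + y ^ j) ^ (2 * n) + (x ^ j - y ^ j) ^ (2 * n) := by
    rw [add_comm (y ^ j), ← neg_sub, (even_two_mul n).neg_pow]
  simp only [mul_sub, sum_sub_distrib, two_mul_sum_choose_mul_zpow hxy,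
    two_mul_sum_choose_mul_zpow hyx, hsymm]

theorem stmt4 (F : ℤ → ℤ) (hF0 : F 0 = 0) (hF1 : F 1 = 1)
    (hF : ∀ j : ℤ, F j = F (j - 1) + F (j - 2)) (L : ℤ → ℤ) (hL0 : L 0 = 2) (hL1 : L 1 = 1)
    (hL : ∀ j : ℤ, L j = L (j - 1) + L (j - 2)) (n : ℕ) (s j : ℤ) :
    2 * ∑ k ∈ Finset.range (n + 1), ((2 * n).choose (2 * k) : ℤ) * F (j * (4 * (k : ℤ) + s))
      = (L j ^ (2 * n) + 5 ^ n * F j ^ (2 * n)) * F (j * (2 * (n : ℤ) + s)) := by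
  have hfib : F = Int.fib := eq_of_fib_recurrence hF
    (fun t => by have := Int.fib_add_two (t - 2); grind) (by simp [hF0]) (by simp [hF1])
  have hlucas : ∀ t, (L t : ℝ) = φ ^ t + ψ ^ t := congrFun <| eq_of_fib_recurrence
    (fun t => by exact_mod_cast hL t)
    (fun t => by
      rw [zpow_eq_zpow_sub_one_add_zpow_sub_two goldenRatio_ne_zero goldenRatio_sq t,
        zpow_eq_zpow_sub_one_add_zpow_sub_two goldenConj_ne_zero goldenConj_sq t]
      ring)
    (by simp [hL0]; norm_num) (by simp [hL1, goldenRatio_add_goldenConj])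
  have hsqrt5 : (√5 : ℝ) ^ (2 * n) = 5 ^ n := by rw [pow_mul, sq_sqrt (by norm_num)]
  apply Int.cast_injective (α := ℝ)
  push_cast
  simp only [hfib, coe_intFib_eq, hlucas, mul_div_assoc', ← sum_div, div_pow, hsqrt5,
    mul_div_cancel_left₀ _ (by norm_num : (5 : ℝ) ^ n ≠ 0)]
  rw [two_mul_sum_choose_mul_zpow_sub_zpow (by rw [goldenRatio_mul_goldenConj]; norm_num)]
end

section
/- For every positive integer n, 2 * ∑_{k=1}^{n} C(2n-1, 2k-1) * L(2k-1) = L(4n-2) - L(2n-1). -/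
/-!
By Binet, `L k = φ ^ k + ψ ^ k`. The sum of the odd-index terms of the binomial expansion of
`(1 + x) ^ m` is `((1 + x) ^ m - (1 - x) ^ m) / 2`, and for `x = φ` (resp. `ψ`),
`1 + φ = φ ^ 2` and `1 - φ = ψ` turn this into `(φ ^ (2 * m) - ψ ^ m) / 2` (resp. with `φ` and
`ψ` swapped). Adding the two gives `(L (2 * m) - L m) / 2`.
-/

open Finset Real
open scoped goldenRatio

theorem Finset.sum_range_two_mul {M : Type*} [AddCommMonoid M] (f : ℕ → M) (n : ℕ) :
    ∑ k ∈ range (2 * n), f k = ∑ i ∈ range n, (f (2 * i) + f (2 * i + 1)) := by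
  induction n with
  | zero => simp
  | succ n ih =>
    rw [mul_add, mul_one, sum_range_succ, sum_range_succ, sum_range_succ, ih, add_assoc]

theorem one_add_pow_sub_one_sub_pow_of_odd {R : Type*} [CommRing R] (x : R) (n : ℕ) :
    (1 + x) ^ (2 * n + 1) - (1 - x) ^ (2 * n + 1)
      = 2 * ∑ i ∈ range (n + 1), ((2 * n + 1).choose (2 * i + 1) : R) * x ^ (2 * i + 1) := by
  rw [add_comm 1 x, sub_eq_neg_add 1 x, add_pow, add_pow, ← sum_sub_distrib,
    show 2 * n + 1 + 1 = 2 * (n + 1) by ring, sum_range_two_mul, mul_sum]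
  refine sum_congr rfl fun i _ => ?_
  rw [(even_two_mul i).neg_pow, (odd_two_mul_add_one i).neg_pow]
  ring

theorem Real.lucas_eq_goldenRatio_pow_add_goldenConj_pow (L : ℕ → ℤ) (hL0 : L 0 = 2)
    (hL1 : L 1 = 1) (hL : ∀ n : ℕ, L (n + 2) = L (n + 1) + L n) :
    ∀ n, (L n : ℝ) = φ ^ n + ψ ^ n
  | 0 => by norm_num [hL0]
  | 1 => by simp [hL1, goldenRatio_add_goldenConj]
  | n + 2 => by
    rw [hL, Int.cast_add, lucas_eq_goldenRatio_pow_add_goldenConj_pow L hL0 hL1 hL (n + 1),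
      lucas_eq_goldenRatio_pow_add_goldenConj_pow L hL0 hL1 hL n]
    linear_combination -(φ ^ n * goldenRatio_sq + ψ ^ n * goldenConj_sq)

theorem two_mul_sum_choose_odd_mul_lucas (L : ℕ → ℤ) (hL0 : L 0 = 2) (hL1 : L 1 = 1)
    (hL : ∀ n : ℕ, L (n + 2) = L (n + 1) + L n) (n : ℕ) :
    2 * ∑ i ∈ range (n + 1), ((2 * n + 1).choose (2 * i + 1) : ℤ) * L (2 * i + 1)
      = L (2 * (2 * n + 1)) - L (2 * n + 1) := by
  have hφ := one_add_pow_sub_one_sub_pow_of_odd φ n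
  have hψ := one_add_pow_sub_one_sub_pow_of_odd ψ n
  rw [one_sub_goldenConj, add_comm 1 φ, ← goldenRatio_sq, ← pow_mul] at hφ
  rw [one_sub_goldenRatio, add_comm 1 ψ, ← goldenConj_sq, ← pow_mul] at hψ
  have hcast := lucas_eq_goldenRatio_pow_add_goldenConj_pow L hL0 hL1 hL
  refine Int.cast_injective (α := ℝ) ?_
  push_cast
  simp only [hcast, mul_add, sum_add_distrib]
  linear_combination -(hφ + hψ)

theorem stmt9_general (L : ℕ → ℤ) (hL0 : L 0 = 2) (hL1 : L 1 = 1)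
    (hL : ∀ n : ℕ, L (n + 2) = L (n + 1) + L n) (n : ℕ) :
    2 * ∑ k ∈ Finset.Icc 1 n, ((2 * n - 1).choose (2 * k - 1) : ℤ) * L (2 * k - 1)
      = L (4 * n - 2) - L (2 * n - 1) := by
  rcases n with _ | n
  · simp
  have hreindex :
      ∑ k ∈ Icc 1 (n + 1), ((2 * (n + 1) - 1).choose (2 * k - 1) : ℤ) * L (2 * k - 1) =
        ∑ i ∈ range (n + 1), ((2 * n + 1).choose (2 * i + 1) : ℤ) * L (2 * i + 1) := by
    rw [← Ico_add_one_right_eq_Icc, sum_Ico_eq_sum_range, Nat.add_sub_cancel]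
    refine sum_congr rfl fun i _ => ?_
    rw [show 2 * (n + 1) - 1 = 2 * n + 1 by omega, show 2 * (1 + i) - 1 = 2 * i + 1 by omega]
  rw [hreindex, two_mul_sum_choose_odd_mul_lucas L hL0 hL1 hL,
    show 4 * (n + 1) - 2 = 2 * (2 * n + 1) by omega, show 2 * (n + 1) - 1 = 2 * n + 1 by omega]

theorem stmt9 (L : ℕ → ℤ) (hL0 : L 0 = 2) (hL1 : L 1 = 1)
    (hL : ∀ n : ℕ, L (n + 2) = L (n + 1) + L n) (n : ℕ) (hn : 0 < n) :
    2 * ∑ k ∈ Finset.Icc 1 n, ((2 * n - 1).choose (2 * k - 1) : ℤ) * L (2 * k - 1)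
      = L (4 * n - 2) - L (2 * n - 1) :=
  stmt9_general L hL0 hL1 hL n
end

section
/- For every non-negative integer n and every integer s, 2 * ∑_{k=1}^{⌈n/2⌉} C(n, 2k-1) * F(2k+s) = F(2n+s+1) - (-1)^s * F(n-s-1), where F is the Fibonacci sequence extended to all integers. -/
/-!
Let `E` be the shift `G ↦ G (· + 1)` on a sequence satisfying the Fibonacci recurrence,
so that `E² = E + 1` there. The binomial theorem then gives `(1 + E)ⁿ = E²ⁿ` and
`(1 - E)ⁿ = (-E⁻¹)ⁿ`, i.e. `∑ C(n,k) F(k+t) = F(2n+t)` and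
`∑ (-1)ᵏ C(n,k) F(k+t) = (-1)ⁿ F(t-n)`. Their difference, taken at `t = s + 1`, is twice the
sum over odd `k = 2i - 1`; the sign comes from `F(-m) = (-1)^(m+1) F(m)`.
-/

open Finset

section FibonacciLike

variable {R : Type*} [CommRing R] {G : ℤ → R}

/-- The binomial expansion of `(u E + v)ⁿ G`, where `u E + v` acts on the shifts of `G` as
`w E^d`. -/
theorem sum_antidiagonal_choose_mul_pow_mul_pow_eq {u v w : R} {d : ℤ}
    (hG : ∀ j, u * G (j + 1) + v * G j = w * G (j + d)) (n : ℕ) (s : ℤ) :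
    ∑ ij ∈ antidiagonal n, (n.choose ij.1 : R) * (u ^ ij.1 * v ^ ij.2 * G (ij.1 + s))
      = w ^ n * G (n * d + s) := by
  induction n generalizing s with
  | zero => simp
  | succ n ih =>
    have step : ∀ ij ∈ antidiagonal n,
        (n.choose ij.1 : R) * (u ^ ij.1 * v ^ (ij.2 + 1) * G (ij.1 + s))
          + (n.choose ij.2 : R) * (u ^ (ij.1 + 1) * v ^ ij.2 * G ((ij.1 + 1 : ℕ) + s))
        = w * ((n.choose ij.1 : R) * (u ^ ij.1 * v ^ ij.2 * G (ij.1 + (s + d)))) := by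
      intro ij hij
      rw [← Nat.choose_symm_of_eq_add (mem_antidiagonal.mp hij).symm, Nat.cast_add,
        Nat.cast_one, add_right_comm, ← add_assoc]
      linear_combination (n.choose ij.1 * u ^ ij.1 * v ^ ij.2 : R) * hG (ij.1 + s)
    rw [sum_antidiagonal_choose_succ_mul (fun i j => u ^ i * v ^ j * G (i + s)),
      ← sum_add_distrib, sum_congr rfl step, ← mul_sum, ih, pow_succ']
    push_cast
    ring_nf

theorem apply_add_one_of_recurrence (hG : ∀ j, G j = G (j - 1) + G (j - 2)) (j : ℤ) :
    G (j + 1) = G j + G (j - 1) := by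
  rw [hG, add_sub_cancel_right, add_sub_assoc, show (1 : ℤ) - 2 = -1 by norm_num,
    ← sub_eq_add_neg]

theorem sum_range_choose_mul_eq (hG : ∀ j, G j = G (j - 1) + G (j - 2)) (n : ℕ) (s : ℤ) :
    ∑ k ∈ range (n + 1), (n.choose k : R) * G (k + s) = G (2 * n + s) := by
  have h := sum_antidiagonal_choose_mul_pow_mul_pow_eq (G := G) (u := 1) (v := 1) (w := 1)
    (d := 2)
    (fun j => by rw [show j + 2 = j + 1 + 1 by ring, apply_add_one_of_recurrence hG (j + 1),
      add_sub_cancel_right]; ring) n s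
  simpa [Nat.sum_antidiagonal_eq_sum_range_succ_mk, mul_comm] using h

theorem sum_range_neg_one_pow_mul_choose_mul_eq (hG : ∀ j, G j = G (j - 1) + G (j - 2))
    (n : ℕ) (s : ℤ) :
    ∑ k ∈ range (n + 1), (-1) ^ k * (n.choose k : R) * G (k + s) = (-1) ^ n * G (s - n) := by
  have h := sum_antidiagonal_choose_mul_pow_mul_pow_eq (G := G) (u := -1) (v := 1) (w := -1)
    (d := -1)
    (fun j => by rw [apply_add_one_of_recurrence hG, ← sub_eq_add_neg]; ring) n s
  simpa [Nat.sum_antidiagonal_eq_sum_range_succ_mk, mul_comm, mul_left_comm, sub_eq_add_neg,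
    add_comm] using h

theorem apply_neg_natCast_of_recurrence (hG0 : G 0 = 0) (hG1 : G 1 = 1)
    (hG : ∀ j, G j = G (j - 1) + G (j - 2)) (m : ℕ) : G (-m) = -(-1) ^ m * G m := by
  induction m using Nat.twoStepInduction with
  | zero => simp [hG0]
  | one =>
    have h := apply_add_one_of_recurrence hG 0
    rw [zero_add, zero_sub, hG0, hG1, zero_add] at h
    simp [← h, hG1]
  | more m ih ih' =>
    have h := apply_add_one_of_recurrence hG (-(m + 1 : ℕ))
    have h' := apply_add_one_of_recurrence hG ((m + 1 : ℕ))
    push_cast at h h' ih ih' ⊢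
    rw [show -((m : ℤ) + 1) + 1 = -m by ring, show -((m : ℤ) + 1) - 1 = -(m + 2) by ring] at h
    rw [add_assoc, show (1 : ℤ) + 1 = 2 by norm_num, add_sub_cancel_right] at h'
    rw [h', eq_sub_of_add_eq' h.symm, ih, ih']
    ring

theorem apply_neg_of_recurrence (hG0 : G 0 = 0) (hG1 : G 1 = 1)
    (hG : ∀ j, G j = G (j - 1) + G (j - 2)) (m : ℤ) : G (-m) = -(m.negOnePow : R) * G m := by
  obtain ⟨k, rfl | rfl⟩ := m.eq_nat_or_neg
  · rw [Int.cast_negOnePow_natCast, apply_neg_natCast_of_recurrence hG0 hG1 hG]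
  · rw [neg_neg, Int.negOnePow_neg, Int.cast_negOnePow_natCast,
      apply_neg_natCast_of_recurrence hG0 hG1 hG, ← mul_assoc, neg_mul_neg, ← pow_add,
      Even.neg_one_pow ⟨k, rfl⟩, one_mul]

end FibonacciLike

theorem sum_range_one_sub_neg_one_pow_mul_eq {R : Type*} [CommRing R] (f : ℕ → R) (n : ℕ) :
    ∑ k ∈ range (n + 1), (1 - (-1) ^ k) * f k
      = 2 * ∑ k ∈ Icc 1 ((n + 1) / 2), f (2 * k - 1) := by
  calc ∑ k ∈ range (n + 1), (1 - (-1) ^ k) * f k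
      = ∑ k ∈ range (n + 1), if Odd k then 2 * f k else 0 := by
        refine sum_congr rfl fun k _ => ?_
        rcases Nat.even_or_odd k with hk | hk
        · rw [hk.neg_one_pow, if_neg (Nat.not_odd_iff_even.mpr hk), sub_self, zero_mul]
        · rw [hk.neg_one_pow, if_pos hk]; ring
    _ = 2 * ∑ k ∈ range (n + 1) with Odd k, f k := by rw [← sum_filter, mul_sum]
    _ = 2 * ∑ k ∈ Icc 1 ((n + 1) / 2), f (2 * k - 1) := by
        congr 1
        refine sum_nbij' (fun k => (k + 1) / 2) (fun k => 2 * k - 1) ?_ ?_ ?_ ?_ ?_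
        all_goals simp only [mem_filter, mem_range, mem_Icc]
        · rintro _ ⟨hk, m, rfl⟩; omega
        · intro k hk; exact ⟨by omega, k - 1, by omega⟩
        · rintro _ ⟨-, m, rfl⟩; omega
        · intro k hk; omega
        · rintro _ ⟨-, m, rfl⟩; congr 1; omega

theorem neg_one_pow_mul_negOnePow_sub_sub_one (n : ℕ) (s : ℤ) :
    (-1 : ℤ) ^ n * ((n - s - 1 : ℤ).negOnePow : ℤ) = -(-1) ^ s.natAbs := by
  rw [← Int.coe_negOnePow, ← Int.cast_negOnePow_natCast, Int.cast_id, Int.cast_id,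
    ← Units.val_mul, ← Int.negOnePow_add,
    show (n : ℤ) + (n - s - 1) = 2 * (n - s - 1) + (s + 1) by ring, Int.negOnePow_add,
    Int.negOnePow_two_mul, one_mul, Int.negOnePow_succ, Units.val_neg]

theorem stmt10 (F : ℤ → ℤ) (hF0 : F 0 = 0) (hF1 : F 1 = 1)
    (hF : ∀ j : ℤ, F j = F (j - 1) + F (j - 2)) (n : ℕ) (s : ℤ) :
    2 * ∑ k ∈ Finset.Icc 1 ((n + 1) / 2), (n.choose (2 * k - 1) : ℤ) * F (2 * (k : ℤ) + s)
      = F (2 * (n : ℤ) + s + 1) - (-1 : ℤ) ^ s.natAbs * F ((n : ℤ) - s - 1) := by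
  calc 2 * ∑ k ∈ Icc 1 ((n + 1) / 2), (n.choose (2 * k - 1) : ℤ) * F (2 * (k : ℤ) + s)
      = 2 * ∑ k ∈ Icc 1 ((n + 1) / 2),
          (n.choose (2 * k - 1) : ℤ) * F ((2 * k - 1 : ℕ) + (s + 1)) := by
        congr 1
        refine sum_congr rfl fun k hk => ?_
        rw [Nat.cast_sub (by have := (mem_Icc.mp hk).1; omega)]
        push_cast; ring_nf
    _ = ∑ k ∈ range (n + 1), (1 - (-1) ^ k) * ((n.choose k : ℤ) * F (k + (s + 1))) :=
        (sum_range_one_sub_neg_one_pow_mul_eq (fun k => (n.choose k : ℤ) * F (k + (s + 1)))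
          n).symm
    _ = ∑ k ∈ range (n + 1), (n.choose k : ℤ) * F (k + (s + 1))
          - ∑ k ∈ range (n + 1), (-1) ^ k * (n.choose k : ℤ) * F (k + (s + 1)) := by
        rw [← sum_sub_distrib]; exact sum_congr rfl fun k _ => by ring
    _ = F (2 * n + (s + 1)) - (-1) ^ n * F (-(n - s - 1)) := by
        rw [sum_range_choose_mul_eq hF, sum_range_neg_one_pow_mul_choose_mul_eq hF]; ring_nf
    _ = F (2 * (n : ℤ) + s + 1) - (-1 : ℤ) ^ s.natAbs * F ((n : ℤ) - s - 1) := by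
        rw [apply_neg_of_recurrence hF0 hF1 hF, Int.cast_id, ← add_assoc]
        linear_combination F (n - s - 1) * neg_one_pow_mul_negOnePow_sub_sub_one n s
end

section
/- For every non-negative integer n and every integer s, 2 * ∑_{k=1}^{⌈n/2⌉} C(n, 2k-1) * L(2k+s) = L(2n+s+1) + (-1)^s * L(n-s-1), where L is the Lucas sequence extended to all integers. -/
/-!
The Lucas recurrence turns binomial sums into shifts: since `L j + L (j + 1) = L (j + 2)`,
Pascal's rule gives `∑ C(n, j) L (j + t) = L (2n + t)`, and since `L j - L (j + 1) = -L (j - 1)`,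
the alternating sum is `∑ (-1)^j C(n, j) L (j + t) = (-1)^n L (t - n)`.
The difference of the two sums (with `t = s + 1`) is twice the sum over odd `j = 2k - 1`, and the
reflection `L (-j) = (-1)^j L j` turns `(-1)^n L (s + 1 - n)` into `-(-1)^s L (n - s - 1)`.
-/

open Finset

theorem sum_choose_mul_eq_pow_mul_of_add_succ {M R : Type*} [AddMonoid M] [CommSemiring R]
    (F : M → ℕ → R) (c : R) (d : M) (hF : ∀ t j, F t j + F t (j + 1) = c * F (t + d) j)
    (n : ℕ) (t : M) :
    ∑ j ∈ range (n + 1), (n.choose j : R) * F t j = c ^ n * F (t + n • d) 0 := by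
  induction n generalizing t with
  | zero => simp
  | succ n ih =>
    rw [sum_choose_succ_mul (fun j _ => F t j) n, ← sum_add_distrib]
    simp only [← mul_add, hF, mul_left_comm _ c, ← mul_sum, ih]
    rw [pow_succ', mul_assoc, add_assoc, ← succ_nsmul']

theorem two_mul_sum_Icc_odd {R : Type*} [CommRing R] (g : ℕ → R) (n : ℕ) :
    2 * ∑ k ∈ Icc 1 ((n + 1) / 2), g (2 * k - 1) =
      ∑ j ∈ range (n + 1), g j - ∑ j ∈ range (n + 1), (-1) ^ j * g j := by
  have hodd : ∑ k ∈ Icc 1 ((n + 1) / 2), g (2 * k - 1) = ∑ j ∈ range (n + 1) with Odd j, g j := by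
    refine sum_nbij' (fun k => 2 * k - 1) (fun j => (j + 1) / 2) ?_ ?_ ?_ ?_ (fun _ _ => rfl)
    all_goals
      intro x hx
      simp only [mem_Icc, mem_filter, mem_range, Nat.odd_iff] at hx ⊢
      omega
  rw [hodd, mul_sum, sum_filter, ← sum_sub_distrib]
  refine sum_congr rfl fun j _ => ?_
  rcases Nat.even_or_odd j with h | h
  · rw [if_neg (Nat.not_odd_iff_even.mpr h), h.neg_one_pow]; ring
  · rw [if_pos h, h.neg_one_pow]; ring

section LucasRecurrence

variable {R : Type*} [CommRing R] {f : ℤ → R}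

theorem sum_choose_mul_add_of_rec (hf : ∀ j, f (j + 2) = f (j + 1) + f j) (n : ℕ) (t : ℤ) :
    ∑ j ∈ range (n + 1), (n.choose j : R) * f (j + t) = f (2 * n + t) := by
  have h := sum_choose_mul_eq_pow_mul_of_add_succ (fun t (j : ℕ) => f (j + t)) 1 2
    (fun t j => by
      push_cast
      rw [one_mul, show (j : ℤ) + (t + 2) = j + t + 2 by ring, hf, add_right_comm (j : ℤ) 1 t,
        add_comm (f _)]) n t
  simpa [add_comm, mul_comm] using h

theorem sum_neg_one_pow_mul_choose_mul_add_of_rec (hf : ∀ j, f (j + 2) = f (j + 1) + f j)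
    (n : ℕ) (t : ℤ) :
    ∑ j ∈ range (n + 1), (-1) ^ j * ((n.choose j : R) * f (j + t)) = (-1) ^ n * f (t - n) := by
  have h := sum_choose_mul_eq_pow_mul_of_add_succ (fun t (j : ℕ) => (-1) ^ j * f (j + t)) (-1) (-1)
    (fun t j => by
      have := hf (j + (t + -1))
      push_cast
      rw [show (j : ℤ) + (t + -1) + 2 = j + 1 + t by ring,
        show (j : ℤ) + (t + -1) + 1 = j + t by ring] at this
      rw [this, pow_succ]
      ring) n t
  simp only [nsmul_eq_mul, mul_neg, mul_one, ← sub_eq_add_neg] at h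
  rw [sum_congr rfl fun j _ => mul_left_comm _ _ _]
  simpa using h

theorem neg_eq_negOnePow_mul_of_rec (hf : ∀ j, f (j + 2) = f (j + 1) + f j) (h0 : f 0 = 2)
    (h1 : f 1 = 1) (j : ℤ) : f (-j) = j.negOnePow * f j := by
  have hnat (m : ℕ) : f (-m) = (-1) ^ m * f m := by
    induction m using Nat.twoStepInduction with
    | zero => simp
    | one =>
      have := hf (-1)
      norm_num at this ⊢
      linear_combination -this - h0 + 2 * h1
    | more m ih0 ih1 =>
      have := hf (-(m + 2))
      rw [show -((m : ℤ) + 2) + 2 = -m by ring,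
        show -((m : ℤ) + 2) + 1 = -(m + 1 : ℕ) by push_cast; ring, ih0, ih1] at this
      push_cast at this ⊢
      rw [hf, pow_succ, pow_succ]
      linear_combination -this
  rcases Int.eq_nat_or_neg j with ⟨m, rfl | rfl⟩
  · rw [hnat, Int.cast_negOnePow_natCast]
  · rw [neg_neg, Int.negOnePow_neg, Int.cast_negOnePow_natCast, hnat, ← mul_assoc, ← mul_pow]
    simp

end LucasRecurrence

theorem stmt11 (L : ℤ → ℤ) (hL0 : L 0 = 2) (hL1 : L 1 = 1)
    (hL : ∀ j : ℤ, L j = L (j - 1) + L (j - 2)) (n : ℕ) (s : ℤ) :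
    2 * ∑ k ∈ Finset.Icc 1 ((n + 1) / 2), (n.choose (2 * k - 1) : ℤ) * L (2 * (k : ℤ) + s)
      = L (2 * (n : ℤ) + s + 1) + (-1 : ℤ) ^ s.natAbs * L ((n : ℤ) - s - 1) := by
  have hrec (j : ℤ) : L (j + 2) = L (j + 1) + L j := by
    have h := hL (j + 2)
    rwa [show j + 2 - 1 = j + 1 by ring, add_sub_cancel_right] at h
  have hodd : ∑ k ∈ Icc 1 ((n + 1) / 2), (n.choose (2 * k - 1) : ℤ) * L (2 * (k : ℤ) + s) =
      ∑ k ∈ Icc 1 ((n + 1) / 2), (n.choose (2 * k - 1) : ℤ) * L ((2 * k - 1 : ℕ) + (s + 1)) := by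
    refine sum_congr rfl fun k hk => ?_
    have hk1 := (mem_Icc.mp hk).1
    rw [Nat.cast_sub (by omega)]
    congr 2
    push_cast
    ring
  have hsign : -((n : ℤ).negOnePow * (n - s - 1).negOnePow) = s.negOnePow := by
    rw [← Int.negOnePow_add, ← Int.negOnePow_succ, Int.negOnePow_eq_iff]
    exact ⟨n - s, by ring⟩
  rw [add_assoc _ s, hodd, two_mul_sum_Icc_odd (fun j => (n.choose j : ℤ) * L (j + (s + 1))),
    sum_choose_mul_add_of_rec hrec, sum_neg_one_pow_mul_choose_mul_add_of_rec hrec,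
    show s + 1 - n = -(n - s - 1) by ring, neg_eq_negOnePow_mul_of_rec hrec hL0 hL1,
    ← Int.coe_negOnePow_natCast, ← Int.coe_negOnePow ℤ s, ← hsign]
  push_cast
  ring
end

section
/- For every odd positive integer n and all integers r and s, ∑_{k=0}^{n} C(2n, 2k) * F(3k+r) * F(3k+s) = 2^(2n-1) * F(n) * F(3n+r+s). -/
/-!
By Binet's formula `√5 F(m) = φ^m - ψ^m`, each summand splits into multiples of `(φ⁶)^k`,
`(ψ⁶)^k` and `(φψ)^(3k) = (-1)^k`. Even-index binomial sums are
`((1 + a)^(2n) + (1 - a)^(2n)) / 2`. For `a = φ³` one has `1 + φ³ = 2φ²` and `1 - φ³ = -2φ`;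
for `a = i` the sum vanishes since `(1 ± i)² = ±2i` and `n` is odd. With `φⁿψⁿ = -1` the
surviving terms recombine into `2^(2n-1) (φⁿ - ψⁿ) (φ^(3n+r+s) - ψ^(3n+r+s))`.
-/

open Finset Real

theorem eq_of_fib_rec {α : Type*} [AddCommGroup α] {G H : ℤ → α}
    (hG : ∀ j, G j = G (j - 1) + G (j - 2)) (hH : ∀ j, H j = H (j - 1) + H (j - 2))
    (h0 : G 0 = H 0) (h1 : G 1 = H 1) : G = H := by
  suffices ∀ m : ℤ, G m = H m ∧ G (m + 1) = H (m + 1) from funext fun m => (this m).1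
  intro m
  induction m using Int.induction_on with
  | zero => exact ⟨h0, by simpa using h1⟩
  | succ i ih =>
    refine ⟨ih.2, ?_⟩
    rw [hG, hH, show (i : ℤ) + 1 + 1 - 1 = i + 1 by ring, show (i : ℤ) + 1 + 1 - 2 = i by ring,
      ih.1, ih.2]
  | pred i ih =>
    refine ⟨?_, by simpa using ih.1⟩
    have hGi := hG (-i + 1)
    have hHi := hH (-i + 1)
    rw [show -(i : ℤ) + 1 - 1 = -i by ring, show -(i : ℤ) + 1 - 2 = -i - 1 by ring] at hGi hHi
    rw [eq_sub_of_add_eq' hGi.symm, eq_sub_of_add_eq' hHi.symm, ih.1, ih.2]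

theorem Int.fib_eq_fib_sub_one_add_fib_sub_two (j : ℤ) : fib j = fib (j - 1) + fib (j - 2) := by
  have h := fib_add_two (j - 2)
  rw [show j - 2 + 2 = j by ring, show j - 2 + 1 = j - 1 by ring] at h
  rw [h, add_comm]

theorem Finset.sum_range_two_mul_of_odd_eq_zero {M : Type*} [AddCommMonoid M] {f : ℕ → M}
    (hf : ∀ k, f (2 * k + 1) = 0) (m : ℕ) :
    ∑ j ∈ range (2 * m), f j = ∑ k ∈ range m, f (2 * k) := by
  induction m with
  | zero => simp
  | succ m ih =>
    rw [mul_add_one, sum_range_succ, hf, add_zero, sum_range_succ, ih, sum_range_succ]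

theorem two_mul_sum_choose_two_mul_mul_sq_pow {R : Type*} [CommRing R] (x : R) (n : ℕ) :
    2 * ∑ k ∈ range (n + 1), ((2 * n).choose (2 * k) : R) * (x ^ 2) ^ k
      = (1 + x) ^ (2 * n) + (1 - x) ^ (2 * n) := by
  set f : ℕ → R := fun j => (x ^ j + (-x) ^ j) * ((2 * n).choose j : R)
  have hf : ∀ k, f (2 * k + 1) = 0 := fun k => by
    simp [f, Odd.neg_pow (odd_two_mul_add_one k)]
  have hbinom : (1 + x) ^ (2 * n) + (1 - x) ^ (2 * n) = ∑ j ∈ range (2 * n + 1), f j := by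
    rw [add_comm 1 x, sub_eq_neg_add, add_pow, add_pow, ← sum_add_distrib]
    exact sum_congr rfl fun j _ => by simp only [f, one_pow, mul_one]; ring
  rw [hbinom, ← add_zero (∑ j ∈ range (2 * n + 1), f j), ← hf n, ← sum_range_succ,
    show 2 * n + 1 + 1 = 2 * (n + 1) by ring, sum_range_two_mul_of_odd_eq_zero hf, mul_sum]
  refine sum_congr rfl fun k _ => ?_
  simp only [f, Even.neg_pow (even_two_mul k), pow_mul]
  ring

theorem sum_choose_two_mul_mul_neg_one_pow_of_odd {n : ℕ} (hn : Odd n) :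
    ∑ k ∈ range (n + 1), ((2 * n).choose (2 * k) : ℤ) * (-1) ^ k = 0 := by
  have hplus : (1 + Complex.I) ^ 2 = 2 * Complex.I := by linear_combination Complex.I_sq
  have hminus : (1 - Complex.I) ^ 2 = -(2 * Complex.I) := by linear_combination Complex.I_sq
  have h := two_mul_sum_choose_two_mul_mul_sq_pow Complex.I n
  rw [pow_mul, pow_mul, hplus, hminus, hn.neg_pow, add_neg_cancel, Complex.I_sq] at h
  exact_mod_cast (mul_eq_zero.mp h).resolve_left two_ne_zero

theorem two_mul_sum_choose_two_mul_mul_pow_six {R : Type*} [CommRing R] {x y : R}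
    (hx : x ^ 2 = x + 1) (hxy : x * y = -1) {n : ℕ} (hn : Odd n) :
    2 * ∑ k ∈ range (n + 1), ((2 * n).choose (2 * k) : R) * (x ^ 6) ^ k
      = 2 ^ (2 * n) * x ^ (3 * n) * (x ^ n - y ^ n) := by
  have hplus : 1 + x ^ 3 = 2 * x ^ 2 := by linear_combination (x - 1) * hx
  have hminus : 1 - x ^ 3 = -(2 * x) := by linear_combination (-(x + 1)) * hx
  have hpow : (x * y) ^ n = -1 := by rw [hxy, hn.neg_one_pow]
  rw [show x ^ 6 = (x ^ 3) ^ 2 by ring, two_mul_sum_choose_two_mul_mul_sq_pow, hplus, hminus,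
    (even_two_mul n).neg_pow]
  linear_combination ((2 : R) ^ (2 * n) * x ^ (2 * n)) * hpow

theorem zpow_three_mul_add {G₀ : Type*} [GroupWithZero G₀] {z : G₀} (hz : z ≠ 0) (k : ℕ)
    (t : ℤ) : z ^ (3 * (k : ℤ) + t) = (z ^ 3) ^ k * z ^ t := by
  rw [zpow_add₀ hz, zpow_mul, zpow_natCast]
  norm_cast

theorem sub_zpow_mul_sub_zpow_of_mul_eq_neg_one {K : Type*} [Field K] {x y : K}
    (hxy : x * y = -1) (k : ℕ) (r s : ℤ) :
    (x ^ (3 * (k : ℤ) + r) - y ^ (3 * (k : ℤ) + r)) *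
        (x ^ (3 * (k : ℤ) + s) - y ^ (3 * (k : ℤ) + s))
      = x ^ r * x ^ s * (x ^ 6) ^ k + y ^ r * y ^ s * (y ^ 6) ^ k
        - (x ^ r * y ^ s + x ^ s * y ^ r) * (-1) ^ k := by
  have hx0 : x ≠ 0 := left_ne_zero_of_mul (hxy ▸ neg_ne_zero.mpr one_ne_zero)
  have hy0 : y ≠ 0 := right_ne_zero_of_mul (hxy ▸ neg_ne_zero.mpr one_ne_zero)
  have hcross : (x ^ 3) ^ k * (y ^ 3) ^ k = (-1) ^ k := by
    rw [← mul_pow, ← mul_pow, hxy]; norm_num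
  rw [zpow_three_mul_add hx0, zpow_three_mul_add hx0, zpow_three_mul_add hy0,
    zpow_three_mul_add hy0]
  linear_combination (-(x ^ r * y ^ s + x ^ s * y ^ r)) * hcross

theorem sum_choose_two_mul_mul_sub_zpow_mul_sub_zpow {K : Type*} [Field K] [NeZero (2 : K)]
    {x y : K} (hx : x ^ 2 = x + 1) (hy : y ^ 2 = y + 1) (hxy : x * y = -1) {n : ℕ} (hn : Odd n)
    (r s : ℤ) :
    ∑ k ∈ range (n + 1), ((2 * n).choose (2 * k) : K) *
        (x ^ (3 * (k : ℤ) + r) - y ^ (3 * (k : ℤ) + r)) *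
        (x ^ (3 * (k : ℤ) + s) - y ^ (3 * (k : ℤ) + s))
      = 2 ^ (2 * n - 1) * (x ^ (n : ℤ) - y ^ (n : ℤ)) *
        (x ^ (3 * (n : ℤ) + r + s) - y ^ (3 * (n : ℤ) + r + s)) := by
  have hx0 : x ≠ 0 := left_ne_zero_of_mul (hxy ▸ neg_ne_zero.mpr one_ne_zero)
  have hy0 : y ≠ 0 := right_ne_zero_of_mul (hxy ▸ neg_ne_zero.mpr one_ne_zero)
  have hA := two_mul_sum_choose_two_mul_mul_pow_six hx hxy hn
  have hB := two_mul_sum_choose_two_mul_mul_pow_six hy (by rw [mul_comm, hxy]) hn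
  have hC : ∑ k ∈ range (n + 1), ((2 * n).choose (2 * k) : K) * (-1) ^ k = 0 := by
    simpa using congrArg (Int.cast : ℤ → K) (sum_choose_two_mul_mul_neg_one_pow_of_odd hn)
  have hsum : ∑ k ∈ range (n + 1), ((2 * n).choose (2 * k) : K) *
        (x ^ (3 * (k : ℤ) + r) - y ^ (3 * (k : ℤ) + r)) *
        (x ^ (3 * (k : ℤ) + s) - y ^ (3 * (k : ℤ) + s))
      = x ^ r * x ^ s * ∑ k ∈ range (n + 1), ((2 * n).choose (2 * k) : K) * (x ^ 6) ^ k
        + y ^ r * y ^ s * ∑ k ∈ range (n + 1), ((2 * n).choose (2 * k) : K) * (y ^ 6) ^ k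
        - (x ^ r * y ^ s + x ^ s * y ^ r) *
          ∑ k ∈ range (n + 1), ((2 * n).choose (2 * k) : K) * (-1) ^ k := by
    simp only [mul_sum, ← sum_add_distrib, ← sum_sub_distrib]
    refine sum_congr rfl fun k _ => ?_
    rw [mul_assoc, sub_zpow_mul_sub_zpow_of_mul_eq_neg_one hxy]
    ring
  have htwo : (2 : K) ^ (2 * n) = 2 * 2 ^ (2 * n - 1) := by
    rw [← pow_succ']; congr 1; have := hn.pos; omega
  apply mul_left_cancel₀ (two_ne_zero : (2 : K) ≠ 0)
  rw [hsum, hC, add_assoc, zpow_three_mul_add hx0, zpow_three_mul_add hy0, zpow_natCast,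
    zpow_natCast, zpow_add₀ hx0, zpow_add₀ hy0]
  linear_combination x ^ r * x ^ s * hA + y ^ r * y ^ s * hB
    + (x ^ n - y ^ n) * (x ^ (3 * n) * x ^ r * x ^ s - y ^ (3 * n) * y ^ r * y ^ s) * htwo

theorem stmt18_general (F : ℤ → ℤ) (hF0 : F 0 = 0) (hF1 : F 1 = 1)
    (hF : ∀ j : ℤ, F j = F (j - 1) + F (j - 2)) (n : ℕ) (hodd : Odd n) (r s : ℤ) :
    ∑ k ∈ Finset.range (n + 1),
        ((2 * n).choose (2 * k) : ℤ) * F (3 * (k : ℤ) + r) * F (3 * (k : ℤ) + s)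
      = 2 ^ (2 * n - 1) * F (n : ℤ) * F (3 * (n : ℤ) + r + s) := by
  obtain rfl : F = Int.fib := eq_of_fib_rec hF Int.fib_eq_fib_sub_one_add_fib_sub_two
    (by rw [hF0, Int.fib_zero]) (by rw [hF1, Int.fib_one])
  have hgolden := sum_choose_two_mul_mul_sub_zpow_mul_sub_zpow goldenRatio_sq goldenConj_sq
    goldenRatio_mul_goldenConj hodd r s
  apply Int.cast_injective (α := ℝ)
  push_cast
  simp only [coe_intFib_eq, ← mul_div_assoc, div_mul_eq_mul_div, div_div, ← sum_div, hgolden]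

theorem stmt18 (F : ℤ → ℤ) (hF0 : F 0 = 0) (hF1 : F 1 = 1)
    (hF : ∀ j : ℤ, F j = F (j - 1) + F (j - 2)) (n : ℕ) (hn : 0 < n) (hodd : Odd n) (r s : ℤ) :
    ∑ k ∈ Finset.range (n + 1),
        ((2 * n).choose (2 * k) : ℤ) * F (3 * (k : ℤ) + r) * F (3 * (k : ℤ) + s)
      = 2 ^ (2 * n - 1) * F (n : ℤ) * F (3 * (n : ℤ) + r + s) :=
  stmt18_general F hF0 hF1 hF n hodd r s
end
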